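/- arXiv:2203.08716 — 4 statements merged into one kernel-verified Lean document; each statement's English description precedes it below -/
import Mathlib

section
/- Let B = M_n with faithful state ψ(a) = Tr(Qa), GNS space L²(B) with GNS map Λ, and multiplication operator m : L²(B) ⊗ L²(B) → L²(B), Λ(a)⊗Λ(b) ↦ Λ(ab). Then the Hilbert-space adjoint m* satisfies m*Λ(e_{ij}Q⁻¹) = Σ_k Λ(e_{ik}Q⁻¹) ⊗ Λ(e_{kj}Q⁻¹), and consequently m m* = Tr(Q⁻¹) · 1 on L²(B). -/
/-!
In the GNS inner product `(Λ a | Λ b) = Tr(Q a* b)` one has `(Λ x | Λ(e_{ij} Q⁻¹)) = conj x_{ij}`,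
because `Q` and `Q⁻¹` cancel under the trace. Hence the formula for `m*` is the conjugate of the
matrix product rule `(x y)_{ij} = ∑ₖ x_{ik} y_{kj}`. Moreover `e_{ik} Q⁻¹ e_{kj} = (Q⁻¹)_{kk} e_{ij}`,
so summing over `k` yields the factor `Tr(Q⁻¹)` in `m m*`.
-/

open scoped ComplexOrder

namespace Matrix

variable {m R : Type*} [Fintype m] [DecidableEq m]

theorem trace_conj_star_mul_single_mul_inv [CommRing R] [StarRing R] {Q : Matrix m m R}
    (hQ : IsUnit Q) (x : Matrix m m R) (i j : m) :
    (Q * star x * (single i j 1 * Q⁻¹)).trace = star (x i j) := by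
  rw [← mul_assoc, mul_assoc Q, trace_conj hQ, trace_mul_single, star_apply, MulOpposite.op_one,
    one_smul]

theorem trace_conj_star_mul_mul_single_mul_inv [CommRing R] [StarRing R] {Q : Matrix m m R}
    (hQ : IsUnit Q) (x y : Matrix m m R) (i j : m) :
    (Q * star (x * y) * (single i j 1 * Q⁻¹)).trace
      = ∑ k, (Q * star x * (single i k 1 * Q⁻¹)).trace
          * (Q * star y * (single k j 1 * Q⁻¹)).trace := by
  simp only [trace_conj_star_mul_single_mul_inv hQ, mul_apply, star_sum, star_mul']

theorem single_one_mul_mul_single_one_mul [Semiring R] (M N : Matrix m m R) (i k j : m) :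
    single i k 1 * M * (single k j 1 * N) = M k k • (single i j 1 * N) := by
  rw [← mul_assoc, single_mul_mul_single, one_mul, mul_one, ← smul_mul_assoc, smul_single,
    smul_eq_mul, mul_one]

theorem sum_single_one_mul_mul_single_one_mul [Semiring R] (M N : Matrix m m R) (i j : m) :
    ∑ k, single i k 1 * M * (single k j 1 * N) = M.trace • (single i j 1 * N) := by
  simp only [single_one_mul_mul_single_one_mul, ← Finset.sum_smul, trace, diag]

end Matrix

theorem stmt5_general (n : ℕ) (Q : Matrix (Fin n) (Fin n) ℂ) (hQ : Q.PosDef) :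
    (∀ i j : Fin n, ∀ x y : Matrix (Fin n) (Fin n) ℂ,
      (Q * star (x * y) * (Matrix.single i j 1 * Q⁻¹)).trace
        = ∑ k, (Q * star x * (Matrix.single i k 1 * Q⁻¹)).trace
            * (Q * star y * (Matrix.single k j 1 * Q⁻¹)).trace) ∧
    (∀ i j : Fin n,
      ∑ k, (Matrix.single i k 1 * Q⁻¹) * (Matrix.single k j 1 * Q⁻¹)
        = Q⁻¹.trace • (Matrix.single i j 1 * Q⁻¹)) :=
  ⟨fun i j x y => Matrix.trace_conj_star_mul_mul_single_mul_inv hQ.isUnit x y i j,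
    Matrix.sum_single_one_mul_mul_single_one_mul Q⁻¹ Q⁻¹⟩

/-- For `B = Mₙ(ℂ)` with faithful state `ψ(a) = Tr(Q a)` and GNS inner product
`(Λ a | Λ b) = Tr(Q a* b)`, the adjoint of the multiplication map satisfies
`m* Λ(e_{ij} Q⁻¹) = ∑ₖ Λ(e_{ik} Q⁻¹) ⊗ Λ(e_{kj} Q⁻¹)` (expressed by testing against all
`Λ x ⊗ Λ y`), and consequently `m m* = Tr(Q⁻¹)·1` (expressed on the basis `Λ(e_{ij}Q⁻¹)`). -/
theorem stmt5 (n : ℕ) (Q : Matrix (Fin n) (Fin n) ℂ) (hQ : Q.PosDef) (hQtr : Q.trace = 1) :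
    (∀ i j : Fin n, ∀ x y : Matrix (Fin n) (Fin n) ℂ,
      (Q * star (x * y) * (Matrix.single i j 1 * Q⁻¹)).trace
        = ∑ k, (Q * star x * (Matrix.single i k 1 * Q⁻¹)).trace
            * (Q * star y * (Matrix.single k j 1 * Q⁻¹)).trace) ∧
    (∀ i j : Fin n,
      ∑ k, (Matrix.single i k 1 * Q⁻¹) * (Matrix.single k j 1 * Q⁻¹)
        = Q⁻¹.trace • (Matrix.single i j 1 * Q⁻¹)) :=
  stmt5_general n Q hQ
end

section
/- Let B be a finite-dimensional C*-algebra with faithful state ψ, GNS space L²(B) with GNS map Λ, and unit map η : ℂ → L²(B), λ ↦ λΛ(1). Then the operator A = θ_{Λ(1),Λ(1)} (i.e. AΛ(a) = ψ(a)Λ(1)) satisfies m(A ⊗ A)m* = A, (1 ⊗ η*m)(1 ⊗ A ⊗ 1)(m*η ⊗ 1) = A, and m(A ⊗ 1)m* = 1, where m is the multiplication operator on L²(B) ⊗ L²(B). -/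
open scoped ComplexInnerProductSpace

/-- Auxiliary data realising `K2` as the Hilbert-space tensor product `K ⊗ K`, together with the
induced tensor product of operators. -/
structure TensorData (K K2 : Type*) [NormedAddCommGroup K] [InnerProductSpace ℂ K]
    [NormedAddCommGroup K2] [InnerProductSpace ℂ K2] where
  tmul : K →ₗ[ℂ] K →ₗ[ℂ] K2
  inner_tmul : ∀ ξ η ξ' η' : K, ⟪tmul ξ η, tmul ξ' η'⟫ = ⟪ξ, ξ'⟫ * ⟪η, η'⟫
  span_tmul : Submodule.span ℂ {z : K2 | ∃ ξ η, z = tmul ξ η} = ⊤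
  map : (K →L[ℂ] K) → (K →L[ℂ] K) → (K2 →L[ℂ] K2)
  map_tmul : ∀ (f g : K →L[ℂ] K) (ξ η : K), map f g (tmul ξ η) = tmul (f ξ) (g η)

/-- On the GNS space of a finite-dimensional C*-algebra `B` with faithful state `ψ`,
the operator `A = θ_{Λ1, Λ1}` (the complete quantum graph, `A Λa = ψ(a) Λ1`) satisfies
`m (A ⊗ A) m* = A`, the undirected axiom `(1 ⊗ η* m)(1 ⊗ A ⊗ 1)(m* η ⊗ 1) = A`, and
`m (A ⊗ 1) m* = 1`. -/
theorem stmt6 {B : Type*} [Ring B] [StarRing B] [Algebra ℂ B]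
    {K K2 : Type*} [NormedAddCommGroup K] [InnerProductSpace ℂ K] [FiniteDimensional ℂ K]
    [NormedAddCommGroup K2] [InnerProductSpace ℂ K2] [FiniteDimensional ℂ K2]
    (td : TensorData K K2) (ψ : B →ₗ[ℂ] ℂ) (hψ1 : ψ 1 = 1)
    (Λ : B ≃ₗ[ℂ] K) (hΛ : ∀ a b : B, ⟪Λ a, Λ b⟫ = ψ (star a * b))
    (m : K2 →L[ℂ] K) (hm : ∀ a b : B, m (td.tmul (Λ a) (Λ b)) = Λ (a * b))
    (η : ℂ →L[ℂ] K) (hη : ∀ z : ℂ, η z = z • Λ 1)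
    (A : K →L[ℂ] K) (hA : ∀ ξ, A ξ = ⟪Λ 1, ξ⟫ • Λ 1) :
    (m ∘L td.map A A ∘L ContinuousLinearMap.adjoint m = A) ∧
    (∀ (ι : Type) [Fintype ι] (ξv ηv : ι → K),
        ContinuousLinearMap.adjoint m (η 1) = ∑ i, td.tmul (ξv i) (ηv i) →
        ∀ ζ, A ζ = ∑ i, ⟪η 1, m (td.tmul (A (ηv i)) ζ)⟫ • ξv i) ∧
    (m ∘L td.map A 1 ∘L ContinuousLinearMap.adjoint m = 1) := by
  classical
  -- left and right unit maps
  set u : K →L[ℂ] K2 := LinearMap.toContinuousLinearMap (td.tmul (Λ 1)) with hu_def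
  set u' : K →L[ℂ] K2 := LinearMap.toContinuousLinearMap (td.tmul.flip (Λ 1)) with hu'_def
  have hu : ∀ ξ : K, u ξ = td.tmul (Λ 1) ξ := fun ξ => rfl
  have hu' : ∀ ξ : K, u' ξ = td.tmul ξ (Λ 1) := fun ξ => rfl
  have h1 : ∀ ξ : K, m (td.tmul (Λ 1) ξ) = ξ := by
    intro ξ
    have := hm 1 (Λ.symm ξ)
    simpa [one_mul] using this
  have h2 : ∀ ξ : K, m (td.tmul ξ (Λ 1)) = ξ := by
    intro ξ
    have := hm (Λ.symm ξ) 1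
    simpa [mul_one] using this
  have hmu : m ∘L u = 1 := by
    ext ξ
    simp [hu, h1]
  have hmu' : m ∘L u' = 1 := by
    ext ξ
    simp [hu', h2]
  have hadj_mu : ContinuousLinearMap.adjoint u ∘L ContinuousLinearMap.adjoint m = 1 := by
    rw [← ContinuousLinearMap.adjoint_comp, hmu, ← ContinuousLinearMap.star_eq_adjoint, star_one]
  have hadj_mu' : ContinuousLinearMap.adjoint u' ∘L ContinuousLinearMap.adjoint m = 1 := by
    rw [← ContinuousLinearMap.adjoint_comp, hmu', ← ContinuousLinearMap.star_eq_adjoint, star_one]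
  have hu_adj : ∀ ξ ηx : K,
      ContinuousLinearMap.adjoint u (td.tmul ξ ηx) = ⟪Λ 1, ξ⟫ • ηx := by
    intro ξ ηx
    apply ext_inner_right ℂ
    intro ζ
    rw [ContinuousLinearMap.adjoint_inner_left]
    simp [hu, td.inner_tmul, inner_smul_left]
  have hu'_adj : ∀ ξ ηx : K,
      ContinuousLinearMap.adjoint u' (td.tmul ξ ηx) = ⟪Λ 1, ηx⟫ • ξ := by
    intro ξ ηx
    apply ext_inner_right ℂ
    intro ζ
    rw [ContinuousLinearMap.adjoint_inner_left]
    simp [hu', td.inner_tmul, inner_smul_left, mul_comm]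
  have hmapAA : td.map A A = u ∘L A ∘L ContinuousLinearMap.adjoint u := by
    apply ContinuousLinearMap.coe_injective
    apply LinearMap.ext_on td.span_tmul
    rintro x ⟨ξ, ηx, rfl⟩
    simp only [ContinuousLinearMap.coe_coe, ContinuousLinearMap.comp_apply]
    rw [td.map_tmul, hu_adj, map_smul, hA ηx, hA ξ, map_smul, hu]
    simp only [map_smul, LinearMap.smul_apply, hA]
    simp [smul_smul, mul_comm]
  have hmapA1 : td.map A 1 = u ∘L ContinuousLinearMap.adjoint u := by
    apply ContinuousLinearMap.coe_injective
    apply LinearMap.ext_on td.span_tmul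
    rintro x ⟨ξ, ηx, rfl⟩
    simp only [ContinuousLinearMap.coe_coe, ContinuousLinearMap.comp_apply]
    rw [td.map_tmul, hu_adj, map_smul, hA ξ, hu, ContinuousLinearMap.one_apply]
    simp [map_smul, LinearMap.smul_apply]
  refine ⟨?_, ?_, ?_⟩
  · ext ζ
    simp only [ContinuousLinearMap.comp_apply, hmapAA]
    have e1 : ContinuousLinearMap.adjoint u (ContinuousLinearMap.adjoint m ζ) = ζ := by
      simpa using DFunLike.congr_fun hadj_mu ζ
    rw [e1]
    simpa using DFunLike.congr_fun hmu (A ζ)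
  · intro ι _ ξv ηv hsum ζ
    have hη1 : η 1 = Λ 1 := by rw [hη]; simp
    have key : (∑ i, ⟪Λ 1, ηv i⟫ • ξv i) = Λ 1 := by
      have h := DFunLike.congr_fun hadj_mu' (Λ 1)
      simp only [ContinuousLinearMap.comp_apply, ContinuousLinearMap.one_apply] at h
      rw [← hη1, hsum, map_sum] at h
      simp only [hu'_adj] at h
      rw [h, hη1]
    have hterm : ∀ i, ⟪η 1, m (td.tmul (A (ηv i)) ζ)⟫ = ⟪Λ 1, ηv i⟫ * ⟪Λ 1, ζ⟫ := by
      intro i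
      rw [hη1, hA (ηv i)]
      have : td.tmul (⟪Λ 1, ηv i⟫ • Λ 1) ζ = ⟪Λ 1, ηv i⟫ • td.tmul (Λ 1) ζ := by
        simp [map_smul]
      rw [this, map_smul, h1, inner_smul_right]
    calc A ζ = ⟪Λ 1, ζ⟫ • Λ 1 := hA ζ
      _ = ⟪Λ 1, ζ⟫ • ∑ i, ⟪Λ 1, ηv i⟫ • ξv i := by rw [key]
      _ = ∑ i, ⟪η 1, m (td.tmul (A (ηv i)) ζ)⟫ • ξv i := by
          rw [Finset.smul_sum]
          refine Finset.sum_congr rfl fun i _ => ?_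
          rw [hterm i, smul_smul, mul_comm]
  · ext ζ
    simp only [ContinuousLinearMap.comp_apply, hmapA1, ContinuousLinearMap.one_apply]
    have e1 : ContinuousLinearMap.adjoint u (ContinuousLinearMap.adjoint m ζ) = ζ := by
      simpa using DFunLike.congr_fun hadj_mu ζ
    rw [e1]
    simpa using DFunLike.congr_fun hmu ζ
end

section
/- Let A ∈ B(L²(B)) be self-adjoint and satisfy m(A⊗A)m* = A and the 'undirected' axiom (1 ⊗ η*m)(1 ⊗ A ⊗ 1)(m*η ⊗ 1) = A. Then A commutes with both the modular operator ∇ and the modular conjugation J. -/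
open scoped ComplexInnerProductSpace

set_option maxHeartbeats 2000000 in
/-- Let `B` be a finite-dimensional C*-algebra with faithful state
`ψ = τ(Q ·)` (`τ` a trace, `Q = R²` with `R = Q^{1/2}` positive), GNS space `K`, modular
operator `∇ Λa = Λ(Q a Q⁻¹)` and modular conjugation `J Λa = Λ(R a* R⁻¹)`.  If `A` is a
self-adjoint operator on `K` satisfying the idempotency axiom `m(A⊗A)m* = A` and the
undirected axiom `(1⊗η*m)(1⊗A⊗1)(m*η⊗1) = A`, then `A` commutes with `∇` and with `J`. -/
theorem stmt14 {B : Type*} [Ring B] [StarRing B] [Algebra ℂ B]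
    {K K2 : Type*} [NormedAddCommGroup K] [InnerProductSpace ℂ K] [FiniteDimensional ℂ K]
    [NormedAddCommGroup K2] [InnerProductSpace ℂ K2] [FiniteDimensional ℂ K2]
    (td : TensorData K K2)
    (τ : B →ₗ[ℂ] ℂ) (hτ : ∀ a b : B, τ (a * b) = τ (b * a))
    (R Rinv : B) (hRsa : star R = R) (hR1 : R * Rinv = 1) (hR2 : Rinv * R = 1)
    (hRpos : ∃ s : B, R = star s * s)
    (Λ : B ≃ₗ[ℂ] K) (hΛ : ∀ a b : B, ⟪Λ a, Λ b⟫ = τ (R * R * star a * b))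
    (m : K2 →L[ℂ] K) (hm : ∀ a b : B, m (td.tmul (Λ a) (Λ b)) = Λ (a * b))
    (η : ℂ →L[ℂ] K) (hη : ∀ z : ℂ, η z = z • Λ 1)
    (nabla : K →L[ℂ] K)
    (hnabla : ∀ a : B, nabla (Λ a) = Λ ((R * R) * a * (Rinv * Rinv)))
    (J : K →ₗ⋆[ℂ] K) (hJ : ∀ a : B, J (Λ a) = Λ (R * star a * Rinv))
    (A : K →L[ℂ] K) (hAsa : ContinuousLinearMap.adjoint A = A)
    (hax1 : m ∘L td.map A A ∘L ContinuousLinearMap.adjoint m = A)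
    (hax2 : ∀ (ι : Type) [Fintype ι] (ξv ηv : ι → K),
        ContinuousLinearMap.adjoint m (η 1) = ∑ i, td.tmul (ξv i) (ηv i) →
        ∀ ζ, A ζ = ∑ i, ⟪η 1, m (td.tmul (A (ηv i)) ζ)⟫ • ξv i) :
    (A ∘L nabla = nabla ∘L A) ∧ (∀ ξ : K, A (J ξ) = J (A ξ)) := by
  classical
  have hRinv_sa : star Rinv = Rinv := by
    calc star Rinv = star Rinv * (R * Rinv) := by rw [hR1, mul_one]
    _ = (star Rinv * star R) * Rinv := by rw [hRsa, mul_assoc]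
    _ = star (R * Rinv) * Rinv := by rw [star_mul]
    _ = Rinv := by rw [hR1, star_one, one_mul]
  -- nondegeneracy
  have hnd : ∀ x : B, (∀ b : B, τ (R * R * x * b) = 0) → x = 0 := by
    intro x hx
    have h1 : ∀ b : B, ⟪Λ (star x), Λ b⟫ = 0 := by
      intro b; rw [hΛ, star_star]; exact hx b
    have h0 : Λ (star x) = 0 := by
      have := h1 (star x)
      rwa [inner_self_eq_zero] at this
    have : star x = (0 : B) := by
      have := Λ.injective (by simpa using h0)
      simpa using this
    simpa using congrArg star this
  -- star is conjugate-linear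
  have hsmul : ∀ (c : ℂ) (a : B), star (c • a) = (starRingEnd ℂ c) • star a := by
    intro c a
    have key : ∀ b : B, τ (R * R * (star (c • a) - (starRingEnd ℂ c) • star a) * b) = 0 := by
      intro b
      have h1 : ⟪Λ (c • a), Λ b⟫ = (starRingEnd ℂ c) * ⟪Λ a, Λ b⟫ := by
        rw [map_smul, inner_smul_left]
      rw [hΛ, hΛ] at h1
      have h2 : R * R * ((starRingEnd ℂ c) • star a) * b
          = (starRingEnd ℂ c) • (R * R * star a * b) := by
        rw [mul_smul_comm, smul_mul_assoc]
      rw [mul_sub, sub_mul, map_sub, h2, map_smul, h1]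
      simp
    have := hnd _ key
    exact sub_eq_zero.mp this
  -- cancellation helpers
  have hRRinv : ∀ x : B, R * (Rinv * x) = x := fun x => by rw [← mul_assoc, hR1, one_mul]
  have hRinvR : ∀ x : B, Rinv * (R * x) = x := fun x => by rw [← mul_assoc, hR2, one_mul]
  -- the antilinear map s
  set s : K → K := fun ξ => Λ (star (Λ.symm ξ)) with hs_def
  have hs_apply : ∀ a : B, s (Λ a) = Λ (star a) := by
    intro a; simp [hs_def]
  have hs_s : ∀ ξ : K, s (s ξ) = ξ := by
    intro ξ; simp [hs_def]
  have hs_inner : ∀ ξ ζ : K, ⟪s ξ, ζ⟫ = ⟪nabla (s ζ), ξ⟫ := by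
    intro ξ ζ
    obtain ⟨a, rfl⟩ : ∃ a, ξ = Λ a := ⟨Λ.symm ξ, (Λ.apply_symm_apply ξ).symm⟩
    obtain ⟨c, rfl⟩ : ∃ c, ζ = Λ c := ⟨Λ.symm ζ, (Λ.apply_symm_apply ζ).symm⟩
    rw [hs_apply, hs_apply, hnabla, hΛ, hΛ]
    simp only [star_star, star_mul, hRsa, hRinv_sa, mul_assoc, hRRinv, hRinvR]
    conv_rhs => rw [hτ]
    simp only [mul_assoc]
  have hs_add : ∀ x y : K, s (x + y) = s x + s y := by
    intro x y; simp [hs_def, star_add]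
  have hs_smul : ∀ (c : ℂ) (x : K), s (c • x) = (starRingEnd ℂ c) • s x := by
    intro c x; simp [hs_def, hsmul]
  -- orthonormal basis
  set bb := stdOrthonormalBasis ℂ K with hbb_def
  have hbb_repr : ∀ ξ : K, ∑ i, ⟪bb i, ξ⟫ • bb i = ξ := fun ξ => bb.sum_repr' ξ
  -- inner products against Λ 1 through m
  have hη1 : η 1 = Λ 1 := by rw [hη, one_smul]
  have hinner1 : ∀ (x : B) (ζ : K), ⟪η 1, m (td.tmul (Λ x) ζ)⟫ = ⟪s (Λ x), ζ⟫ := by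
    intro x ζ
    obtain ⟨c, rfl⟩ : ∃ c, ζ = Λ c := ⟨Λ.symm ζ, (Λ.apply_symm_apply ζ).symm⟩
    rw [hη1, hm, hs_apply, hΛ, hΛ]
    simp [mul_assoc]
  -- decomposition of m† (η 1)
  have hmstar : ContinuousLinearMap.adjoint m (η 1) = ∑ i, td.tmul (bb i) (s (bb i)) := by
    have key : ∀ z : K2,
        ⟪z, ContinuousLinearMap.adjoint m (η 1) - ∑ i, td.tmul (bb i) (s (bb i))⟫ = 0 := by
      intro z
      have hz : z ∈ Submodule.span ℂ {z : K2 | ∃ ξ ζ, z = td.tmul ξ ζ} := by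
        rw [td.span_tmul]; trivial
      induction hz using Submodule.span_induction with
      | mem z hz =>
        obtain ⟨ξ, ζ, rfl⟩ := hz
        rw [inner_sub_right, sub_eq_zero, ContinuousLinearMap.adjoint_inner_right]
        obtain ⟨a, rfl⟩ : ∃ a, ξ = Λ a := ⟨Λ.symm ξ, (Λ.apply_symm_apply ξ).symm⟩
        obtain ⟨c, rfl⟩ : ∃ c, ζ = Λ c := ⟨Λ.symm ζ, (Λ.apply_symm_apply ζ).symm⟩
        rw [hm, hη1, hΛ, inner_sum]
        have hstar_a : star a = ∑ i, ⟪Λ a, bb i⟫ • star (Λ.symm (bb i)) := by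
          have h1 : a = ∑ i, ⟪bb i, Λ a⟫ • Λ.symm (bb i) := by
            conv_lhs => rw [← Λ.symm_apply_apply a, ← hbb_repr (Λ a)]
            simp
          calc star a = star (∑ i, ⟪bb i, Λ a⟫ • Λ.symm (bb i)) := by rw [← h1]
          _ = ∑ i, ⟪Λ a, bb i⟫ • star (Λ.symm (bb i)) := by
              rw [star_sum]
              refine Finset.sum_congr rfl fun i _ => ?_
              rw [hsmul, inner_conj_symm]
        calc τ (R * R * star (a * c) * 1)
            = τ (R * R * star c * star a) := by rw [mul_one, star_mul, ← mul_assoc]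
          _ = ∑ i, ⟪Λ a, bb i⟫ * τ (R * R * star c * star (Λ.symm (bb i))) := by
              rw [hstar_a, Finset.mul_sum, map_sum]
              refine Finset.sum_congr rfl fun i _ => ?_
              rw [mul_smul_comm, map_smul]
              simp
          _ = ∑ i, ⟪td.tmul (Λ a) (Λ c), td.tmul (bb i) (s (bb i))⟫ := by
              refine Finset.sum_congr rfl fun i _ => ?_
              rw [td.inner_tmul]
              congr 1
              have : s (bb i) = Λ (star (Λ.symm (bb i))) := rfl
              rw [this, hΛ]
      | zero => simp
      | add x y _ _ hx hy => rw [inner_add_left, hx, hy, add_zero]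
      | smul c x _ hx => rw [inner_smul_left, hx, mul_zero]
    have h0 := key (ContinuousLinearMap.adjoint m (η 1) - ∑ i, td.tmul (bb i) (s (bb i)))
    rw [inner_self_eq_zero, sub_eq_zero] at h0
    exact h0
  have hAip : ∀ x y : K, ⟪A x, y⟫ = ⟪x, A y⟫ := by
    intro x y
    conv_lhs => rw [← hAsa]
    exact ContinuousLinearMap.adjoint_inner_left A y x
  have hs_map_sum : ∀ {ιt : Type} (t : Finset ιt) (f : ιt → K),
      s (∑ i ∈ t, f i) = ∑ i ∈ t, s (f i) := by
    intro ιt t f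
    induction t using Finset.cons_induction with
    | empty => simp [hs_def]
    | cons a t ha ih => rw [Finset.sum_cons, hs_add, ih, Finset.sum_cons]
  -- the representation of A coming from the undirected axiom
  have hA_repr : ∀ ζ : K, A ζ = ∑ i, ⟪s (A (s (bb i))), ζ⟫ • bb i := by
    intro ζ
    have h := hax2 (Fin (Module.finrank ℂ K)) (fun i => bb i) (fun i => s (bb i)) hmstar ζ
    rw [h]
    refine Finset.sum_congr rfl fun i _ => ?_
    congr 1
    have hx : A (s (bb i)) = Λ (Λ.symm (A (s (bb i)))) := (Λ.apply_symm_apply _).symm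
    rw [hx, hinner1]
  -- step (I): ⟪s (A (s ζ')), ζ⟫ = ⟪ζ', A ζ⟫
  have hstepI : ∀ ζ' ζ : K, ⟪s (A (s ζ')), ζ⟫ = ⟪ζ', A ζ⟫ := by
    intro ζ' ζ
    have hsum : s (A (s ζ')) = ∑ i, ⟪bb i, ζ'⟫ • s (A (s (bb i))) := by
      conv_lhs => rw [← hbb_repr ζ']
      rw [hs_map_sum, map_sum, hs_map_sum]
      refine Finset.sum_congr rfl fun i _ => ?_
      rw [hs_smul, map_smul, hs_smul]
      simp
    rw [hsum, hA_repr ζ, inner_sum, sum_inner]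
    refine Finset.sum_congr rfl fun i _ => ?_
    rw [inner_smul_left, inner_smul_right, inner_conj_symm]
    ring
  -- A commutes with s
  have hAs : ∀ ξ : K, A (s ξ) = s (A ξ) := by
    have h1 : ∀ ζ' : K, s (A (s ζ')) = A ζ' := by
      intro ζ'
      refine ext_inner_right ℂ fun ζ => ?_
      rw [hstepI, hAip]
    intro ξ
    have := h1 (s ξ)
    rw [hs_s] at this
    exact this.symm
  -- Part 1 : A commutes with nabla
  have part1 : A ∘L nabla = nabla ∘L A := by
    refine ContinuousLinearMap.ext fun ξ => ?_
    refine ext_inner_left ℂ fun ζ => ?_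
    have e1 : ⟪ζ, (A ∘L nabla) ξ⟫ = ⟪A ζ, nabla ξ⟫ := (hAip ζ (nabla ξ)).symm
    have e2 : nabla ξ = nabla (s (s ξ)) := (congrArg nabla (hs_s ξ)).symm
    rw [e1, e2, ← inner_conj_symm, ← hs_inner (A ζ) (s ξ), ← hAs, hAip, hs_inner, hAs, hs_s,
      inner_conj_symm]
    rfl
  -- the operator M : Λ a ↦ Λ (R a Rinv)
  obtain ⟨M, hM⟩ : ∃ M : K →L[ℂ] K, ∀ a : B, M (Λ a) = Λ (R * a * Rinv) := by
    refine ⟨LinearMap.toContinuousLinearMap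
      ((Λ.toLinearMap.comp ((LinearMap.mulRight ℂ Rinv).comp
        (LinearMap.mulLeft ℂ R))).comp Λ.symm.toLinearMap), fun a => ?_⟩
    simp
  have hMM : ∀ ξ : K, M (M ξ) = nabla ξ := by
    intro ξ
    obtain ⟨a, rfl⟩ : ∃ a, ξ = Λ a := ⟨Λ.symm ξ, (Λ.apply_symm_apply ξ).symm⟩
    rw [hM, hM, hnabla]
    congr 1
    simp [mul_assoc, hRinvR]
  have hMsym : ∀ x y : K, ⟪M x, y⟫ = ⟪x, M y⟫ := by
    intro x y
    obtain ⟨a, rfl⟩ : ∃ a, x = Λ a := ⟨Λ.symm x, (Λ.apply_symm_apply x).symm⟩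
    obtain ⟨c, rfl⟩ : ∃ c, y = Λ c := ⟨Λ.symm y, (Λ.apply_symm_apply y).symm⟩
    rw [hM, hM, hΛ, hΛ]
    simp only [star_mul, hRsa, hRinv_sa, star_star, mul_assoc, hRRinv, hRinvR]
    conv_rhs => rw [hτ]
    simp only [mul_assoc, hRRinv, hRinvR, hR2, mul_one]
  have hMform : ∀ ξ : K, ∃ v : K, ⟪ξ, M ξ⟫ = ⟪v, v⟫ ∧ (ξ ≠ 0 → v ≠ 0) := by
    obtain ⟨s₀, hs₀⟩ := hRpos
    have hts : ∀ x : B, star s₀ * (s₀ * x) = R * x := by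
      intro x; rw [← mul_assoc, ← hs₀]
    intro ξ
    obtain ⟨a, rfl⟩ : ∃ a, ξ = Λ a := ⟨Λ.symm ξ, (Λ.apply_symm_apply ξ).symm⟩
    refine ⟨Λ (s₀ * a * star s₀ * Rinv), ?_, ?_⟩
    · rw [hM, hΛ, hΛ]
      simp only [star_mul, hRsa, hRinv_sa, star_star, mul_assoc, hRRinv, hRinvR, hts]
      conv_lhs => rw [hτ]
      conv_rhs => rw [hτ]
      simp only [mul_assoc, hRRinv, hRinvR, hR2, mul_one, hts]
      conv_rhs => rw [hτ]
      simp only [mul_assoc, hRRinv, hRinvR, hR2, mul_one, hts]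
      rw [← hs₀]
      conv_lhs => rw [hτ]
      simp only [mul_assoc]
    · intro ha hv
      apply ha
      have h0 : s₀ * a * star s₀ * Rinv = 0 := by
        have := Λ.injective (by simpa using hv)
        simpa using this
      have h1 : s₀ * (a * star s₀) = 0 := by
        have := congrArg (· * R) h0
        simpa [mul_assoc, hRinvR, hR2, mul_one, zero_mul] using this
      have h2 : R * (a * R) = 0 := by
        have := congrArg (fun x => star s₀ * (x * s₀)) h1
        simpa [mul_assoc, hts, zero_mul, mul_zero, ← hs₀] using this
      have h3 : a = 0 := by
        have := congrArg (fun x => Rinv * (x * Rinv)) h2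
        simpa [mul_assoc, hRinvR, hR1, mul_one, zero_mul, mul_zero, hRRinv] using this
      rw [h3, map_zero]
  -- A commutes with nabla pointwise
  have hp1 : ∀ ξ : K, A (nabla ξ) = nabla (A ξ) := by
    intro ξ
    have := ContinuousLinearMap.ext_iff.mp part1 ξ
    simpa using this
  -- the commutator C of A and M
  set C : K →L[ℂ] K := A ∘L M - M ∘L A with hC_def
  have hC_apply : ∀ ξ : K, C ξ = A (M ξ) - M (A ξ) := by
    intro ξ; simp [hC_def]
  have hMC : ∀ ξ : K, M (C ξ) = -C (M ξ) := by
    intro ξ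
    rw [hC_apply, hC_apply, map_sub, neg_sub]
    congr 1
    rw [hMM, hMM, hp1]
  -- M is symmetric as a linear map
  have hMsymL : (↑M : K →ₗ[ℂ] K).IsSymmetric := fun x y => hMsym x y
  have hspan : (⨆ μ : ℂ, Module.End.eigenspace (↑M : K →ₗ[ℂ] K) μ) = ⊤ := by
    have h := hMsymL.orthogonalComplement_iSup_eigenspaces_eq_bot
    rwa [Submodule.orthogonal_eq_bot_iff] at h
  have hker : ∀ (μ : ℂ) (ξ : K), ξ ∈ Module.End.eigenspace (↑M : K →ₗ[ℂ] K) μ → C ξ = 0 := by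
    intro μ ξ hξ
    by_cases hξ0 : ξ = 0
    · rw [hξ0, map_zero]
    have hMξ : M ξ = μ • ξ := Module.End.mem_eigenspace_iff.mp hξ
    -- μ is a positive real number
    obtain ⟨v, hv, hv0⟩ := hMform ξ
    have hvne := hv0 hξ0
    have hμξ : ⟪ξ, M ξ⟫ = μ * (‖ξ‖ : ℂ) ^ 2 := by
      rw [hMξ, inner_smul_right, inner_self_eq_norm_sq_to_K]
      rfl
    have hμ_eq : μ * (‖ξ‖ : ℂ) ^ 2 = (‖v‖ : ℂ) ^ 2 := by
      rw [← hμξ, hv, inner_self_eq_norm_sq_to_K]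
      rfl
    have hξn : (0:ℝ) < ‖ξ‖ := norm_pos_iff.mpr hξ0
    have hvn : (0:ℝ) < ‖v‖ := norm_pos_iff.mpr hvne
    have hξC : ((‖ξ‖ : ℂ)) ^ 2 ≠ 0 :=
      pow_ne_zero _ (Complex.ofReal_ne_zero.mpr (ne_of_gt hξn))
    have hμ_val : μ = ((‖v‖ ^ 2 / ‖ξ‖ ^ 2 : ℝ) : ℂ) := by
      push_cast
      rw [eq_div_iff hξC]
      exact hμ_eq
    have hμpos : (0:ℝ) < ‖v‖ ^ 2 / ‖ξ‖ ^ 2 := by positivity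
    -- now suppose C ξ ≠ 0
    by_contra hC0
    obtain ⟨w, hw, hw0⟩ := hMform (C ξ)
    have hwne := hw0 hC0
    have h1 : M (C ξ) = -(μ • C ξ) := by
      rw [hMC, hMξ, map_smul]
    have h2 : ⟪C ξ, M (C ξ)⟫ = -(μ * (‖C ξ‖ : ℂ) ^ 2) := by
      rw [h1, inner_neg_right, inner_smul_right, inner_self_eq_norm_sq_to_K]
      rfl
    have h3 : ((‖w‖ : ℂ) ^ 2) = -(μ * (‖C ξ‖ : ℂ) ^ 2) := by
      rw [← h2, hw, inner_self_eq_norm_sq_to_K]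
      rfl
    rw [hμ_val] at h3
    have h4 : (‖w‖ ^ 2 : ℝ) = -((‖v‖ ^ 2 / ‖ξ‖ ^ 2) * ‖C ξ‖ ^ 2) := by
      exact_mod_cast congrArg Complex.re h3
    have hwn : (0:ℝ) < ‖w‖ ^ 2 := pow_pos (norm_pos_iff.mpr hwne) 2
    have hCn : (0:ℝ) < ‖C ξ‖ ^ 2 := pow_pos (norm_pos_iff.mpr hC0) 2
    nlinarith
  have hC0 : ∀ ξ : K, C ξ = 0 := by
    intro ξ
    have hle : (⨆ μ : ℂ, Module.End.eigenspace (↑M : K →ₗ[ℂ] K) μ) ≤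
        LinearMap.ker (↑C : K →ₗ[ℂ] K) := by
      refine iSup_le fun μ x hx => LinearMap.mem_ker.mpr ?_
      exact hker μ x hx
    have hmem : ξ ∈ (⨆ μ : ℂ, Module.End.eigenspace (↑M : K →ₗ[ℂ] K) μ) := by
      rw [hspan]; trivial
    exact LinearMap.mem_ker.mp (hle hmem)
  have hAM : ∀ ξ : K, A (M ξ) = M (A ξ) := by
    intro ξ
    have := hC0 ξ
    rw [hC_apply, sub_eq_zero] at this
    exact this
  -- conclusion for J
  have hJs : ∀ ξ : K, J ξ = M (s ξ) := by
    intro ξ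
    obtain ⟨a, rfl⟩ : ∃ a, ξ = Λ a := ⟨Λ.symm ξ, (Λ.apply_symm_apply ξ).symm⟩
    rw [hJ, hs_apply, hM]
  refine ⟨part1, fun ξ => ?_⟩
  rw [hJs, hJs, hAM, hAs]
end

section
/- Let B be a finite-dimensional C*-algebra with faithful state ψ and central invertible positive element mm* (the image of mm* under the GNS identification), and let A ∈ B(L²(B)) be self-adjoint satisfying the idempotency axiom m(A⊗A)m* = A, the undirected axiom, and the reflexivity axiom m(A⊗1)m* = 1. Define A′ = A − (mm*)⁻¹. Then A′ is self-adjoint, satisfies m(A′⊗A′)m* = A′, the undirected axiom, and the irreflexivity axiom m(A′⊗1)m* = 0; and conversely. -/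
open scoped ComplexInnerProductSpace

section Aux
variable {K K2 : Type*} [NormedAddCommGroup K] [InnerProductSpace ℂ K]
  [NormedAddCommGroup K2] [InnerProductSpace ℂ K2]

lemma TensorData.ext_inner (td : TensorData K K2) {u v : K2}
    (h : ∀ ξ η : K, ⟪u, td.tmul ξ η⟫ = ⟪v, td.tmul ξ η⟫) : u = v := by
  have key : ∀ z : K2, ⟪u - v, z⟫ = 0 := by
    intro z
    have hz : z ∈ Submodule.span ℂ {z : K2 | ∃ ξ η, z = td.tmul ξ η} := by
      rw [td.span_tmul]; trivial
    induction hz using Submodule.span_induction with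
    | mem z hzmem =>
      obtain ⟨ξ, ηv, rfl⟩ := hzmem
      rw [inner_sub_left, h ξ ηv, sub_self]
    | zero => simp
    | add y z _ _ hy hz => rw [inner_add_right, hy, hz, add_zero]
    | smul c y _ hy => rw [inner_smul_right, hy, mul_zero]
  have := key (u - v)
  rw [inner_self_eq_zero] at this
  exact sub_eq_zero.mp this

lemma bil_expand {V : Type*} [AddCommGroup V] [Module ℂ V] {ι : Type*} [Fintype ι]
    (eb : OrthonormalBasis ι ℂ K) (Bil : K →ₗ[ℂ] K →ₗ[ℂ] V) (ξ ηv : K) :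
    Bil ξ ηv = ∑ k, ∑ l, (⟪eb k, ξ⟫ * ⟪eb l, ηv⟫) • Bil (eb k) (eb l) := by
  calc Bil ξ ηv = Bil (∑ k, ⟪eb k, ξ⟫ • eb k) ηv := by rw [eb.sum_repr']
    _ = ∑ k, ⟪eb k, ξ⟫ • Bil (eb k) ηv := by
        rw [map_sum, LinearMap.sum_apply]
        exact Finset.sum_congr rfl fun k _ => by
          rw [LinearMap.map_smul, LinearMap.smul_apply]
    _ = ∑ k, ⟪eb k, ξ⟫ • Bil (eb k) (∑ l, ⟪eb l, ηv⟫ • eb l) := by rw [eb.sum_repr']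
    _ = ∑ k, ∑ l, (⟪eb k, ξ⟫ * ⟪eb l, ηv⟫) • Bil (eb k) (eb l) := by
        refine Finset.sum_congr rfl fun k _ => ?_
        rw [map_sum, Finset.smul_sum]
        refine Finset.sum_congr rfl fun l _ => ?_
        rw [LinearMap.map_smul, smul_smul]

lemma sum_bil (td : TensorData K K2) {V : Type*} [AddCommGroup V] [Module ℂ V]
    {ι : Type*} [Fintype ι] (eb : OrthonormalBasis ι ℂ K)
    (Bil : K →ₗ[ℂ] K →ₗ[ℂ] V) {ι' : Type*} [Fintype ι'] (ξv ηv : ι' → K) :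
    ∑ i, Bil (ξv i) (ηv i)
      = ∑ k, ∑ l, ⟪td.tmul (eb k) (eb l), ∑ i, td.tmul (ξv i) (ηv i)⟫ • Bil (eb k) (eb l) := by
  have h1 : ∀ k l, ⟪td.tmul (eb k) (eb l), ∑ i, td.tmul (ξv i) (ηv i)⟫
      = ∑ i, ⟪eb k, ξv i⟫ * ⟪eb l, ηv i⟫ := by
    intro k l
    rw [inner_sum]
    exact Finset.sum_congr rfl fun i _ => td.inner_tmul _ _ _ _
  calc ∑ i, Bil (ξv i) (ηv i)
      = ∑ i, ∑ k, ∑ l, (⟪eb k, ξv i⟫ * ⟪eb l, ηv i⟫) • Bil (eb k) (eb l) :=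
        Finset.sum_congr rfl fun i _ => bil_expand eb Bil _ _
    _ = ∑ k, ∑ l, (∑ i, ⟪eb k, ξv i⟫ * ⟪eb l, ηv i⟫) • Bil (eb k) (eb l) := by
        rw [Finset.sum_comm]
        refine Finset.sum_congr rfl fun k _ => ?_
        rw [Finset.sum_comm]
        refine Finset.sum_congr rfl fun l _ => ?_
        rw [Finset.sum_smul]
    _ = _ := by
        refine Finset.sum_congr rfl fun k _ => Finset.sum_congr rfl fun l _ => ?_
        rw [h1]

lemma bil_indep (td : TensorData K K2) {V : Type*} [AddCommGroup V] [Module ℂ V]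
    [FiniteDimensional ℂ K]
    (Bil : K →ₗ[ℂ] K →ₗ[ℂ] V) {ι ι' : Type*} [Fintype ι] [Fintype ι']
    (ξv ηv : ι → K) (ξv' ηv' : ι' → K)
    (h : ∑ i, td.tmul (ξv i) (ηv i) = ∑ i, td.tmul (ξv' i) (ηv' i)) :
    ∑ i, Bil (ξv i) (ηv i) = ∑ i, Bil (ξv' i) (ηv' i) := by
  rw [sum_bil td (stdOrthonormalBasis ℂ K) Bil ξv ηv,
    sum_bil td (stdOrthonormalBasis ℂ K) Bil ξv' ηv', h]

lemma tensor_expand (td : TensorData K K2) [FiniteDimensional ℂ K]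
    {ι : Type*} [Fintype ι] (eb : OrthonormalBasis ι ℂ K) (z : K2) :
    z = ∑ k, ∑ l, ⟪td.tmul (eb k) (eb l), z⟫ • td.tmul (eb k) (eb l) := by
  refine td.ext_inner fun ξ ηv => ?_
  have hexp : td.tmul ξ ηv
      = ∑ k, ∑ l, (⟪eb k, ξ⟫ * ⟪eb l, ηv⟫) • td.tmul (eb k) (eb l) :=
    bil_expand eb td.tmul ξ ηv
  conv_lhs => rw [hexp]
  rw [inner_sum, sum_inner]
  refine Finset.sum_congr rfl fun k _ => ?_
  rw [inner_sum, sum_inner]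
  refine Finset.sum_congr rfl fun l _ => ?_
  rw [inner_smul_right, inner_smul_left, inner_conj_symm, td.inner_tmul]
  ring

end Aux

set_option maxHeartbeats 2000000 in
/-- Let `B` be a finite-dimensional C*-algebra with faithful state `ψ`, and let
`m m*` be (left multiplication by) the central invertible positive element `x`, with inverse
`(m m*)⁻¹ = Ninv` (left multiplication by `xinv`).  For a self-adjoint `A ∈ B(L²(B))` put
`A′ = A − (m m*)⁻¹`.  Then `A′` is self-adjoint, and `A` satisfies the idempotency axiom
`m(A⊗A)m* = A`, the undirected axiom, and the reflexivity axiom `m(A⊗1)m* = 1` if and only if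
`A′` satisfies the idempotency axiom, the undirected axiom, and the irreflexivity axiom
`m(A′⊗1)m* = 0`. -/
theorem stmt19 {B : Type*} [Ring B] [StarRing B] [Algebra ℂ B]
    {K K2 : Type*} [NormedAddCommGroup K] [InnerProductSpace ℂ K] [FiniteDimensional ℂ K]
    [NormedAddCommGroup K2] [InnerProductSpace ℂ K2] [FiniteDimensional ℂ K2]
    (td : TensorData K K2) (ψ : B →ₗ[ℂ] ℂ)
    (Λ : B ≃ₗ[ℂ] K) (hΛ : ∀ a b : B, ⟪Λ a, Λ b⟫ = ψ (star a * b))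
    (m : K2 →L[ℂ] K) (hm : ∀ a b : B, m (td.tmul (Λ a) (Λ b)) = Λ (a * b))
    (η : ℂ →L[ℂ] K) (hη : ∀ z : ℂ, η z = z • Λ 1)
    (x xinv : B) (hxcentral : ∀ b : B, x * b = b * x)
    (hx1 : x * xinv = 1) (hx2 : xinv * x = 1)
    (hN : ∀ a : B, (m ∘L ContinuousLinearMap.adjoint m) (Λ a) = Λ (x * a))
    (Ninv : K →L[ℂ] K) (hNinv : ∀ a : B, Ninv (Λ a) = Λ (xinv * a))
    (A : K →L[ℂ] K) (hAsa : ContinuousLinearMap.adjoint A = A) :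
    (ContinuousLinearMap.adjoint (A - Ninv) = A - Ninv) ∧
    (((m ∘L td.map A A ∘L ContinuousLinearMap.adjoint m = A) ∧
      (∀ (ι : Type) [Fintype ι] (ξv ηv : ι → K),
        ContinuousLinearMap.adjoint m (η 1) = ∑ i, td.tmul (ξv i) (ηv i) →
        ∀ ζ, A ζ = ∑ i, ⟪η 1, m (td.tmul (A (ηv i)) ζ)⟫ • ξv i) ∧
      (m ∘L td.map A 1 ∘L ContinuousLinearMap.adjoint m = 1))
     ↔
     ((m ∘L td.map (A - Ninv) (A - Ninv) ∘L ContinuousLinearMap.adjoint m = A - Ninv) ∧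
      (∀ (ι : Type) [Fintype ι] (ξv ηv : ι → K),
        ContinuousLinearMap.adjoint m (η 1) = ∑ i, td.tmul (ξv i) (ηv i) →
        ∀ ζ, (A - Ninv) ζ = ∑ i, ⟪η 1, m (td.tmul ((A - Ninv) (ηv i)) ζ)⟫ • ξv i) ∧
      (m ∘L td.map (A - Ninv) 1 ∘L ContinuousLinearMap.adjoint m = 0))) := by
  have hη1 : η 1 = Λ 1 := by rw [hη 1, one_smul]
  -- basic extensionality lemmas
  have hinextK : ∀ {u v : K}, (∀ d : B, ⟪Λ d, u⟫ = ⟪Λ d, v⟫) → u = v := by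
    intro u v h
    have h2 := h (Λ.symm (u - v))
    rw [Λ.apply_symm_apply] at h2
    have h3 : ⟪u - v, u - v⟫ = 0 := by rw [inner_sub_right, h2, sub_self]
    rw [inner_self_eq_zero] at h3
    exact sub_eq_zero.mp h3
  have hextK : ∀ {S T : K →L[ℂ] K}, (∀ c : B, S (Λ c) = T (Λ c)) → S = T := by
    intro S T h
    ext ξ
    have := h (Λ.symm ξ)
    rwa [Λ.apply_symm_apply] at this
  -- centrality of xinv and star xinv
  have hxinvc : ∀ b : B, xinv * b = b * xinv := by
    intro b
    calc xinv * b = xinv * b * 1 := (mul_one _).symm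
      _ = xinv * b * (x * xinv) := by rw [hx1]
      _ = xinv * (b * x) * xinv := by simp only [mul_assoc]
      _ = xinv * (x * b) * xinv := by rw [← hxcentral]
      _ = (xinv * x) * (b * xinv) := by simp only [mul_assoc]
      _ = b * xinv := by rw [hx2, one_mul]
  have hstarxinv : ∀ b : B, star xinv * b = b * star xinv := by
    intro b
    have h := congrArg star (hxinvc (star b))
    rw [star_mul, star_mul, star_star] at h
    exact h.symm
  -- the canonical decomposition of m† (Λ 1)
  obtain ⟨ι₀, _inst, E, F, hD⟩ : ∃ (ι₀ : Type) (_ : Fintype ι₀) (E F : ι₀ → B),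
      ContinuousLinearMap.adjoint m (Λ 1) = ∑ p, td.tmul (Λ (E p)) (Λ (F p)) := by
    set eb := stdOrthonormalBasis ℂ K
    refine ⟨Fin (Module.finrank ℂ K) × Fin (Module.finrank ℂ K), inferInstance,
      fun p => Λ.symm (⟪td.tmul (eb p.1) (eb p.2), ContinuousLinearMap.adjoint m (Λ 1)⟫ • eb p.1),
      fun p => Λ.symm (eb p.2), ?_⟩
    simp only [Λ.apply_symm_apply]
    rw [Fintype.sum_prod_type]
    conv_lhs => rw [tensor_expand td eb (ContinuousLinearMap.adjoint m (Λ 1))]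
    refine Finset.sum_congr rfl fun k _ => Finset.sum_congr rfl fun l _ => ?_
    rw [LinearMap.map_smul, LinearMap.smul_apply]
  -- (†)
  have hdagger : ∀ a b : B, (∑ p, ψ (star (E p) * a) * ψ (star (F p) * b)) = ψ (a * b) := by
    intro a b
    have h1 : ⟪ContinuousLinearMap.adjoint m (Λ 1), td.tmul (Λ a) (Λ b)⟫ = ψ (a * b) := by
      rw [ContinuousLinearMap.adjoint_inner_left, hm, hΛ, star_one, one_mul]
    rw [hD, sum_inner] at h1
    rw [← h1]
    exact Finset.sum_congr rfl fun p _ => by rw [td.inner_tmul, hΛ, hΛ]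
  -- formula for m† (Λ c)
  have hAdmc : ∀ c : B,
      ContinuousLinearMap.adjoint m (Λ c) = ∑ p, td.tmul (Λ (c * E p)) (Λ (F p)) := by
    intro c
    refine td.ext_inner fun ξ ηe => ?_
    obtain ⟨a, rfl⟩ : ∃ a, ξ = Λ a := ⟨Λ.symm ξ, (Λ.apply_symm_apply ξ).symm⟩
    obtain ⟨b, rfl⟩ : ∃ b, ηe = Λ b := ⟨Λ.symm ηe, (Λ.apply_symm_apply ηe).symm⟩
    rw [ContinuousLinearMap.adjoint_inner_left, hm, hΛ, sum_inner]
    have : ∀ p, ⟪td.tmul (Λ (c * E p)) (Λ (F p)), td.tmul (Λ a) (Λ b)⟫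
        = ψ (star (E p) * (star c * a)) * ψ (star (F p) * b) := by
      intro p
      rw [td.inner_tmul, hΛ, hΛ, star_mul, mul_assoc]
    rw [Finset.sum_congr rfl fun p _ => this p, hdagger, mul_assoc]
  -- Schur product applied pointwise
  have hSchur : ∀ (T S : K →L[ℂ] K) (c : B),
      (m ∘L td.map T S ∘L ContinuousLinearMap.adjoint m) (Λ c)
        = ∑ p, m (td.tmul (T (Λ (c * E p))) (S (Λ (F p)))) := by
    intro T S c
    simp only [ContinuousLinearMap.comp_apply]
    rw [hAdmc, map_sum, map_sum]
    exact Finset.sum_congr rfl fun p _ => by rw [td.map_tmul]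
  -- coefficients of the undirected axiom at the canonical decomposition
  have hcoef : ∀ (T : K →L[ℂ] K) (q : ι₀) (u : B),
      ⟪η 1, m (td.tmul (T (Λ (F q))) (Λ u))⟫ = ψ (Λ.symm (T (Λ (F q))) * u) := by
    intro T q u
    rw [hη1]
    conv_lhs => rw [show T (Λ (F q)) = Λ (Λ.symm (T (Λ (F q)))) from (Λ.apply_symm_apply _).symm]
    rw [hm, hΛ, star_one, one_mul]
  -- (‡)
  have hdd : ∀ a b : B, (∑ p, ψ (a * E p) * ψ (b * F p)) = ψ (b * a) := by
    intro a b
    calc ∑ p, ψ (a * E p) * ψ (b * F p)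
        = ∑ p, ⟪td.tmul (Λ (star a)) (Λ (star b)), td.tmul (Λ (E p)) (Λ (F p))⟫ := by
          refine Finset.sum_congr rfl fun p _ => ?_
          rw [td.inner_tmul, hΛ, hΛ, star_star, star_star]
      _ = ⟪td.tmul (Λ (star a)) (Λ (star b)), ContinuousLinearMap.adjoint m (Λ 1)⟫ := by
          rw [hD, inner_sum]
      _ = ⟪m (td.tmul (Λ (star a)) (Λ (star b))), Λ 1⟫ := by
          rw [ContinuousLinearMap.adjoint_inner_right]
      _ = ψ (b * a) := by
          rw [hm, hΛ, star_mul, star_star, star_star, mul_one]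
  -- (‡‡)
  have hddd : ∀ a b : B, (∑ p, ψ (a * E p) * ψ (F p * b)) = ψ (a * b) := by
    intro a b
    obtain ⟨σ, hσ⟩ : ∃ σ : B, ∀ v : B, ψ (v * b) = ψ (star σ * v) := by
      let φ : K →ₗ[ℂ] ℂ := ψ ∘ₗ (LinearMap.mulRight ℂ b) ∘ₗ Λ.symm.toLinearMap
      let φ' : K →L[ℂ] ℂ := LinearMap.toContinuousLinearMap φ
      refine ⟨Λ.symm ((InnerProductSpace.toDual ℂ K).symm φ'), fun v => ?_⟩
      have h3 : ⟪(InnerProductSpace.toDual ℂ K).symm φ', Λ v⟫ = φ' (Λ v) :=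
        InnerProductSpace.toDual_symm_apply
      have h4 : φ' (Λ v) = ψ (v * b) := by simp [φ', φ]
      rw [← hΛ, Λ.apply_symm_apply, h3, h4]
    calc ∑ p, ψ (a * E p) * ψ (F p * b)
        = ∑ p, ⟪td.tmul (Λ (star a)) (Λ σ), td.tmul (Λ (E p)) (Λ (F p))⟫ := by
          refine Finset.sum_congr rfl fun p _ => ?_
          rw [td.inner_tmul, hΛ, hΛ, star_star, ← hσ]
      _ = ⟪td.tmul (Λ (star a)) (Λ σ), ContinuousLinearMap.adjoint m (Λ 1)⟫ := by
          rw [hD, inner_sum]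
      _ = ⟪m (td.tmul (Λ (star a)) (Λ σ)), Λ 1⟫ := by
          rw [ContinuousLinearMap.adjoint_inner_right]
      _ = ψ (a * b) := by
          rw [hm, hΛ, star_mul, star_star, mul_one, ← hσ a]
  -- Psi formula: m (1 ⊗ T) m† (Λ c) = Λ (c * w T)
  have hPsi : ∀ (T : K →L[ℂ] K) (c : B),
      (m ∘L td.map 1 T ∘L ContinuousLinearMap.adjoint m) (Λ c)
        = Λ (c * ∑ p, E p * Λ.symm (T (Λ (F p)))) := by
    intro T c
    rw [hSchur]
    have h1 : ∀ p, m (td.tmul ((1 : K →L[ℂ] K) (Λ (c * E p))) (T (Λ (F p))))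
        = Λ (c * (E p * Λ.symm (T (Λ (F p))))) := by
      intro p
      rw [ContinuousLinearMap.one_apply]
      conv_lhs => rw [show T (Λ (F p)) = Λ (Λ.symm (T (Λ (F p)))) from (Λ.apply_symm_apply _).symm]
      rw [hm, mul_assoc]
    rw [Finset.sum_congr rfl fun p _ => h1 p, ← map_sum, ← Finset.mul_sum]
  -- Phi formula, assuming the undirected axiom at the canonical decomposition
  have hPhi : ∀ (T : K →L[ℂ] K),
      (∀ u : B, T (Λ u) = ∑ q, ψ (Λ.symm (T (Λ (F q))) * u) • Λ (E q)) →
      ∀ c : B, (m ∘L td.map T 1 ∘L ContinuousLinearMap.adjoint m) (Λ c)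
        = Λ ((∑ p, E p * Λ.symm (T (Λ (F p)))) * c) := by
    intro T hT c
    refine hinextK fun d => ?_
    rw [hSchur]
    have h1 : ∀ p, m (td.tmul (T (Λ (c * E p))) ((1 : K →L[ℂ] K) (Λ (F p))))
        = ∑ q, ψ (Λ.symm (T (Λ (F q))) * (c * E p)) • Λ (E q * F p) := by
      intro p
      rw [ContinuousLinearMap.one_apply, hT (c * E p), map_sum, LinearMap.sum_apply, map_sum]
      refine Finset.sum_congr rfl fun q _ => ?_
      rw [LinearMap.map_smul, LinearMap.smul_apply, map_smul, hm]
    rw [Finset.sum_congr rfl fun p _ => h1 p]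
    rw [inner_sum]
    have h2 : ∀ p, ⟪Λ d, ∑ q, ψ (Λ.symm (T (Λ (F q))) * (c * E p)) • Λ (E q * F p)⟫
        = ∑ q, ψ ((Λ.symm (T (Λ (F q))) * c) * E p) * ψ ((star d * E q) * F p) := by
      intro p
      rw [inner_sum]
      refine Finset.sum_congr rfl fun q _ => ?_
      rw [inner_smul_right, hΛ, mul_assoc, mul_assoc]
    rw [Finset.sum_congr rfl fun p _ => h2 p, Finset.sum_comm]
    have h3 : ∀ q, (∑ p, ψ ((Λ.symm (T (Λ (F q))) * c) * E p) * ψ ((star d * E q) * F p))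
        = ψ (star d * (E q * Λ.symm (T (Λ (F q))) * c)) := by
      intro q
      rw [hdd]
      congr 1
      simp only [mul_assoc]
    rw [Finset.sum_congr rfl fun q _ => h3 q, ← map_sum, hΛ]
    congr 1
    rw [← Finset.mul_sum, Finset.sum_mul]
  -- ∑ E p * F p = x
  have hEF : ∑ p, E p * F p = x := by
    have h1 : Λ (∑ p, E p * F p) = Λ x := by
      rw [map_sum]
      have h2 : ∀ p, Λ (E p * F p) = m (td.tmul (Λ (E p)) (Λ (F p))) := fun p => (hm _ _).symm
      rw [Finset.sum_congr rfl fun p _ => h2 p, ← map_sum, ← hD]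
      have h3 := hN 1
      rw [mul_one] at h3
      rw [ContinuousLinearMap.comp_apply] at h3
      exact h3
    exact Λ.injective h1
  -- w Ninv = 1
  have hwNinv : ∑ p, E p * Λ.symm (Ninv (Λ (F p))) = 1 := by
    have h1 : ∀ p, E p * Λ.symm (Ninv (Λ (F p))) = xinv * (E p * F p) := by
      intro p
      rw [hNinv, Λ.symm_apply_apply, ← mul_assoc, ← hxinvc (E p), mul_assoc]
    rw [Finset.sum_congr rfl fun p _ => h1 p, ← Finset.mul_sum, hEF, hx2]
  -- left shift: m (Ninv ⊗ T) m† (Λ c) = m (1 ⊗ T) m† (Λ (xinv * c))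
  have hL : ∀ (T : K →L[ℂ] K) (c : B),
      (m ∘L td.map Ninv T ∘L ContinuousLinearMap.adjoint m) (Λ c)
        = (m ∘L td.map 1 T ∘L ContinuousLinearMap.adjoint m) (Λ (xinv * c)) := by
    intro T c
    rw [hSchur, hSchur]
    refine Finset.sum_congr rfl fun p _ => ?_
    rw [ContinuousLinearMap.one_apply, hNinv, ← mul_assoc]
  -- right shift: m (T ⊗ Ninv) m† (Λ c) = m (T ⊗ 1) m† (Λ (xinv * c))
  have hR : ∀ (T : K →L[ℂ] K) (c : B),
      (m ∘L td.map T Ninv ∘L ContinuousLinearMap.adjoint m) (Λ c)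
        = (m ∘L td.map T 1 ∘L ContinuousLinearMap.adjoint m) (Λ (xinv * c)) := by
    intro T c
    have hkey : (∑ p, td.tmul (Λ (c * E p)) (Ninv (Λ (F p))))
        = ContinuousLinearMap.adjoint m (Λ (xinv * c)) := by
      refine td.ext_inner fun ξ ηe => ?_
      obtain ⟨a, rfl⟩ : ∃ a, ξ = Λ a := ⟨Λ.symm ξ, (Λ.apply_symm_apply ξ).symm⟩
      obtain ⟨b, rfl⟩ : ∃ b, ηe = Λ b := ⟨Λ.symm ηe, (Λ.apply_symm_apply ηe).symm⟩
      rw [sum_inner]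
      have h1 : ∀ p, ⟪td.tmul (Λ (c * E p)) (Ninv (Λ (F p))), td.tmul (Λ a) (Λ b)⟫
          = ψ (star (E p) * (star c * a)) * ψ (star (F p) * (star xinv * b)) := by
        intro p
        rw [hNinv, td.inner_tmul, hΛ, hΛ, star_mul, star_mul, mul_assoc, mul_assoc]
      rw [Finset.sum_congr rfl fun p _ => h1 p, hdagger,
        ContinuousLinearMap.adjoint_inner_left, hm, hΛ]
      congr 1
      rw [star_mul]
      calc (star c * a) * (star xinv * b) = star c * ((a * star xinv) * b) := by
            simp only [mul_assoc]
        _ = star c * ((star xinv * a) * b) := by rw [← hstarxinv]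
        _ = (star c * star xinv) * (a * b) := by simp only [mul_assoc]
    rw [hSchur]
    have h2 : (∑ p, m (td.tmul (T (Λ (c * E p))) (Ninv (Λ (F p)))))
        = m ((td.map T 1) (∑ p, td.tmul (Λ (c * E p)) (Ninv (Λ (F p))))) := by
      rw [map_sum, map_sum]
      refine Finset.sum_congr rfl fun p _ => ?_
      rw [td.map_tmul, ContinuousLinearMap.one_apply]
    rw [h2, hkey]
    simp only [ContinuousLinearMap.comp_apply]
  -- evaluations with constants
  have h11 : ∀ c : B, (m ∘L td.map 1 1 ∘L ContinuousLinearMap.adjoint m) (Λ c) = Λ (c * x) := by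
    intro c
    rw [hPsi]
    congr 2
    calc ∑ p, E p * Λ.symm ((1 : K →L[ℂ] K) (Λ (F p))) = ∑ p, E p * F p := by
          refine Finset.sum_congr rfl fun p _ => ?_
          rw [ContinuousLinearMap.one_apply, Λ.symm_apply_apply]
      _ = x := hEF
  have h1Ninv : ∀ c : B,
      (m ∘L td.map 1 Ninv ∘L ContinuousLinearMap.adjoint m) (Λ c) = Λ c := by
    intro c
    rw [hPsi, hwNinv, mul_one]
  have hNinv1 : ∀ c : B,
      (m ∘L td.map Ninv 1 ∘L ContinuousLinearMap.adjoint m) (Λ c) = Λ c := by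
    intro c
    rw [hL, h11]
    congr 1
    rw [mul_assoc, ← hxcentral, ← mul_assoc, hx2, one_mul]
  have hNinvNinv : ∀ c : B,
      (m ∘L td.map Ninv Ninv ∘L ContinuousLinearMap.adjoint m) (Λ c) = Λ (xinv * c) := by
    intro c
    rw [hL, h1Ninv]
  -- the undirected axiom for Ninv, at an arbitrary decomposition
  have hundNinv : ∀ (ι : Type) [Fintype ι] (ξv ηv : ι → K),
      ContinuousLinearMap.adjoint m (η 1) = ∑ i, td.tmul (ξv i) (ηv i) →
      ∀ ζ, Ninv ζ = ∑ i, ⟪η 1, m (td.tmul (Ninv (ηv i)) ζ)⟫ • ξv i := by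
    intro ι inst ξv ηv hDv ζ
    have hsum : ∑ i, td.tmul (ξv i) (ηv i) = ∑ p, td.tmul (Λ (E p)) (Λ (F p)) := by
      rw [← hDv, hη1, hD]
    have key := bil_indep td (LinearMap.mk₂ ℂ
        (fun ξe ηe => ⟪η 1, m (td.tmul (Ninv ηe) ζ)⟫ • ξe)
        (fun m1 m2 n => smul_add _ _ _)
        (fun a m1 n => smul_comm _ _ _)
        (fun m1 n1 n2 => by
          simp only [map_add, LinearMap.add_apply, inner_add_right, add_smul])
        (fun a m1 n1 => by
          simp only [map_smul, LinearMap.smul_apply, inner_smul_right, mul_smul]))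
      ξv ηv (fun p => Λ (E p)) (fun p => Λ (F p)) hsum
    simp only [LinearMap.mk₂_apply] at key
    rw [key]
    obtain ⟨u, rfl⟩ : ∃ u, ζ = Λ u := ⟨Λ.symm ζ, (Λ.apply_symm_apply ζ).symm⟩
    refine hinextK fun d => ?_
    rw [inner_sum]
    have h1 : ∀ p, ⟪Λ d, ⟪η 1, m (td.tmul (Ninv (Λ (F p))) (Λ u))⟫ • Λ (E p)⟫
        = ψ (star d * E p) * ψ (F p * (xinv * u)) := by
      intro p
      rw [inner_smul_right, hcoef, hΛ, hNinv, Λ.symm_apply_apply, mul_comm]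
      congr 2
      rw [← mul_assoc, ← hxinvc (F p), mul_assoc]
    rw [Finset.sum_congr rfl fun p _ => h1 p, hddd, hNinv, hΛ]
  -- Ninv is self-adjoint
  have hNadj : ContinuousLinearMap.adjoint Ninv = Ninv := by
    have hcomp2 : Ninv ∘L (m ∘L ContinuousLinearMap.adjoint m) = 1 := by
      apply hextK; intro c
      rw [ContinuousLinearMap.comp_apply, hN, hNinv, ← mul_assoc, hx2, one_mul,
        ContinuousLinearMap.one_apply]
    have hNsa : ContinuousLinearMap.adjoint (m ∘L ContinuousLinearMap.adjoint m)
        = m ∘L ContinuousLinearMap.adjoint m := by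
      rw [ContinuousLinearMap.adjoint_comp, ContinuousLinearMap.adjoint_adjoint]
    have h5 : (m ∘L ContinuousLinearMap.adjoint m) ∘L ContinuousLinearMap.adjoint Ninv = 1 := by
      rw [← hNsa, ← ContinuousLinearMap.adjoint_comp, hcomp2, ContinuousLinearMap.one_def,
        ContinuousLinearMap.adjoint_id]
    calc ContinuousLinearMap.adjoint Ninv
        = (Ninv ∘L (m ∘L ContinuousLinearMap.adjoint m)) ∘L ContinuousLinearMap.adjoint Ninv := by
          rw [hcomp2, ContinuousLinearMap.one_def, ContinuousLinearMap.id_comp]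
      _ = Ninv ∘L ((m ∘L ContinuousLinearMap.adjoint m) ∘L ContinuousLinearMap.adjoint Ninv) :=
          (ContinuousLinearMap.comp_assoc _ _ _)
      _ = Ninv := by rw [h5, ContinuousLinearMap.one_def, ContinuousLinearMap.comp_id]
  refine ⟨?_, ?_⟩
  · rw [map_sub, hAsa, hNadj]
  have hDeta : ContinuousLinearMap.adjoint m (η 1) = ∑ p, td.tmul (Λ (E p)) (Λ (F p)) := by
    rw [hη1]; exact hD
  constructor
  · rintro ⟨hidem, hund, hrefl⟩
    have hundA : ∀ u : B, A (Λ u) = ∑ q, ψ (Λ.symm (A (Λ (F q))) * u) • Λ (E q) := by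
      intro u
      rw [hund ι₀ (fun p => Λ (E p)) (fun p => Λ (F p)) hDeta (Λ u)]
      exact Finset.sum_congr rfl fun q _ => by rw [hcoef]
    have hPhiA := hPhi A hundA
    have hwA : (∑ p, E p * Λ.symm (A (Λ (F p)))) = 1 := by
      have h1 := hPhiA 1
      rw [hrefl, ContinuousLinearMap.one_apply, mul_one] at h1
      exact (Λ.injective h1).symm
    refine ⟨?_, ?_, ?_⟩
    · apply hextK; intro c
      rw [hSchur]
      have expand : ∀ p, m (td.tmul ((A - Ninv) (Λ (c * E p))) ((A - Ninv) (Λ (F p))))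
          = (m (td.tmul (A (Λ (c * E p))) (A (Λ (F p))))
              - m (td.tmul (A (Λ (c * E p))) (Ninv (Λ (F p)))))
            - (m (td.tmul (Ninv (Λ (c * E p))) (A (Λ (F p))))
              - m (td.tmul (Ninv (Λ (c * E p))) (Ninv (Λ (F p))))) := by
        intro p
        simp only [ContinuousLinearMap.sub_apply, map_sub, LinearMap.sub_apply]
        abel
      rw [Finset.sum_congr rfl fun p _ => expand p, Finset.sum_sub_distrib,
        Finset.sum_sub_distrib, Finset.sum_sub_distrib, ← hSchur A A, ← hSchur A Ninv,
        ← hSchur Ninv A, ← hSchur Ninv Ninv, hidem, hR A c, hL A c, hNinvNinv,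
        hPhiA (xinv * c), hPsi A (xinv * c), hwA, one_mul, mul_one,
        ContinuousLinearMap.sub_apply, hNinv]
      abel
    · intro ι inst ξv ηv hDv ζ
      have h1 := hund ι ξv ηv hDv ζ
      have h2 := hundNinv ι ξv ηv hDv ζ
      rw [ContinuousLinearMap.sub_apply, h1, h2, ← Finset.sum_sub_distrib]
      refine Finset.sum_congr rfl fun i _ => ?_
      rw [ContinuousLinearMap.sub_apply, map_sub, LinearMap.sub_apply, map_sub,
        inner_sub_right, sub_smul]
    · apply hextK; intro c
      rw [hSchur]
      have expand : ∀ p, m (td.tmul ((A - Ninv) (Λ (c * E p))) ((1 : K →L[ℂ] K) (Λ (F p))))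
          = m (td.tmul (A (Λ (c * E p))) ((1 : K →L[ℂ] K) (Λ (F p))))
            - m (td.tmul (Ninv (Λ (c * E p))) ((1 : K →L[ℂ] K) (Λ (F p)))) := by
        intro p
        simp only [ContinuousLinearMap.sub_apply, map_sub, LinearMap.sub_apply]
      rw [Finset.sum_congr rfl fun p _ => expand p, Finset.sum_sub_distrib, ← hSchur A 1,
        ← hSchur Ninv 1, hrefl, hNinv1, ContinuousLinearMap.one_apply,
        ContinuousLinearMap.zero_apply, sub_self]
  · rintro ⟨hidem', hund', hirrefl⟩
    have hundA' : ∀ u : B,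
        (A - Ninv) (Λ u) = ∑ q, ψ (Λ.symm ((A - Ninv) (Λ (F q))) * u) • Λ (E q) := by
      intro u
      rw [hund' ι₀ (fun p => Λ (E p)) (fun p => Λ (F p)) hDeta (Λ u)]
      exact Finset.sum_congr rfl fun q _ => by rw [hcoef]
    have hPhiA' := hPhi (A - Ninv) hundA'
    have hwA' : (∑ p, E p * Λ.symm ((A - Ninv) (Λ (F p)))) = 0 := by
      have h1 := hPhiA' 1
      rw [hirrefl, ContinuousLinearMap.zero_apply, mul_one] at h1
      apply Λ.injective
      rw [map_zero, ← h1]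
    refine ⟨?_, ?_, ?_⟩
    · apply hextK; intro c
      rw [hSchur]
      have hsplit : ∀ v : K, A v = (A - Ninv) v + Ninv v := by intro v; simp
      have expand : ∀ p, m (td.tmul (A (Λ (c * E p))) (A (Λ (F p))))
          = (m (td.tmul ((A - Ninv) (Λ (c * E p))) ((A - Ninv) (Λ (F p))))
              + m (td.tmul ((A - Ninv) (Λ (c * E p))) (Ninv (Λ (F p)))))
            + (m (td.tmul (Ninv (Λ (c * E p))) ((A - Ninv) (Λ (F p))))
              + m (td.tmul (Ninv (Λ (c * E p))) (Ninv (Λ (F p))))) := by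
        intro p
        rw [hsplit (Λ (c * E p)), hsplit (Λ (F p))]
        simp only [map_add, LinearMap.add_apply]
        abel
      rw [Finset.sum_congr rfl fun p _ => expand p, Finset.sum_add_distrib,
        Finset.sum_add_distrib, Finset.sum_add_distrib, ← hSchur (A - Ninv) (A - Ninv),
        ← hSchur (A - Ninv) Ninv, ← hSchur Ninv (A - Ninv), ← hSchur Ninv Ninv, hidem',
        hR (A - Ninv) c, hL (A - Ninv) c, hNinvNinv, hPhiA' (xinv * c),
        hPsi (A - Ninv) (xinv * c), hwA', zero_mul, mul_zero, map_zero,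
        ContinuousLinearMap.sub_apply, hNinv]
      abel
    · intro ι inst ξv ηv hDv ζ
      have h1 := hund' ι ξv ηv hDv ζ
      have h2 := hundNinv ι ξv ηv hDv ζ
      have h3 : A ζ = (A - Ninv) ζ + Ninv ζ := by simp
      rw [h3, h1, h2, ← Finset.sum_add_distrib]
      refine Finset.sum_congr rfl fun i _ => ?_
      have h4 : A (ηv i) = (A - Ninv) (ηv i) + Ninv (ηv i) := by simp
      rw [h4, map_add, LinearMap.add_apply, map_add, inner_add_right, add_smul]
    · apply hextK; intro c
      rw [hSchur]
      have expand : ∀ p, m (td.tmul (A (Λ (c * E p))) ((1 : K →L[ℂ] K) (Λ (F p))))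
          = m (td.tmul ((A - Ninv) (Λ (c * E p))) ((1 : K →L[ℂ] K) (Λ (F p))))
            + m (td.tmul (Ninv (Λ (c * E p))) ((1 : K →L[ℂ] K) (Λ (F p)))) := by
        intro p
        rw [show A (Λ (c * E p)) = (A - Ninv) (Λ (c * E p)) + Ninv (Λ (c * E p)) by simp]
        simp only [map_add, LinearMap.add_apply]
      rw [Finset.sum_congr rfl fun p _ => expand p, Finset.sum_add_distrib,
        ← hSchur (A - Ninv) 1, ← hSchur Ninv 1, hirrefl, hNinv1,
        ContinuousLinearMap.zero_apply, ContinuousLinearMap.one_apply, zero_add]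
end
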